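/- Let $E$ and $T$ be real symmetric $d \times d$ matrices with $E \succeq I_d$ (so $E$ is positive definite). Then $\mathrm{tr}(E^{-1} T E^{-1} T) \leq \mathrm{tr}(T^2) = \|T\|_F^2$. -/

import Mathlib

/-!
With `A = E⁻¹` we have `0 ⪯ A ⪯ 1`, the upper bound because
`1 - E⁻¹ = E⁻¹ (E² - E) E⁻¹` and `E² - E = (E - 1) + (E - 1)² ⪰ 0`. Then
`tr (T²) - tr (ATAT) = tr ((1 - A) T²) + tr (A · T (1 - A) T)`, and the trace of a product of
two positive semidefinite matrices is nonnegative.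
-/

open Matrix

namespace Matrix

variable {𝕜 n : Type*} [RCLike 𝕜]

open scoped ComplexOrder

lemma PosSemidef.posDef_of_sub_one [DecidableEq n] {E : Matrix n n 𝕜} (hE : (E - 1).PosSemidef) :
    E.PosDef := by
  simpa using PosDef.posSemidef_add hE PosDef.one

variable [Fintype n]

lemma PosSemidef.trace_mul_nonneg {A B : Matrix n n 𝕜} (hA : A.PosSemidef) (hB : B.PosSemidef) :
    0 ≤ (A * B).trace := by
  classical
  obtain ⟨C, rfl⟩ : ∃ C : Matrix n n 𝕜, A = Cᴴ * C := by
    open scoped MatrixOrder in exact CStarAlgebra.nonneg_iff_eq_star_mul_self.mp hA.nonneg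
  rw [mul_assoc, trace_mul_comm, mul_assoc, ← mul_assoc]
  exact (hB.mul_mul_conjTranspose_same C).trace_nonneg

variable [DecidableEq n]

lemma PosSemidef.one_sub_inv {E : Matrix n n 𝕜} (hE : (E - 1).PosSemidef) :
    (1 - E⁻¹).PosSemidef := by
  have hEpos := hE.posDef_of_sub_one
  have hEu : IsUnit E.det := (isUnit_iff_isUnit_det E).mp hEpos.isUnit
  have hEsq : E - 1 + (E - 1) * (E - 1) = E * E - E := by noncomm_ring
  have conj : 1 - E⁻¹ = (E⁻¹)ᴴ * ((E - 1) + (E - 1)ᴴ * (E - 1)) * E⁻¹ := by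
    rw [hE.isHermitian.eq, hEpos.isHermitian.inv.eq, hEsq, mul_sub, sub_mul,
      ← mul_assoc E⁻¹ E E, nonsing_inv_mul _ hEu, one_mul, mul_nonsing_inv _ hEu, one_mul]
  rw [conj]
  exact (hE.add (posSemidef_conjTranspose_mul_self _)).conjTranspose_mul_mul_same _

lemma trace_mul_mul_mul_le_trace_mul_self {A T : Matrix n n 𝕜} (hA : A.PosSemidef)
    (hA₁ : (1 - A).PosSemidef) (hT : T.IsHermitian) :
    (A * T * A * T).trace ≤ (T * T).trace := by
  have hTT : (T * T).PosSemidef := by simpa [hT.eq] using posSemidef_conjTranspose_mul_self T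
  have hTAT : (T * (1 - A) * T).PosSemidef := by
    simpa [hT.eq] using hA₁.conjTranspose_mul_mul_same T
  have split : (T * T).trace - (A * T * A * T).trace =
      ((1 - A) * (T * T)).trace + (A * (T * (1 - A) * T)).trace := by
    simp only [sub_mul, mul_sub, one_mul, mul_one, trace_sub, mul_assoc]
    abel
  rw [← sub_nonneg, split]
  exact add_nonneg (hA₁.trace_mul_nonneg hTT) (hA.trace_mul_nonneg hTAT)

end Matrix

theorem trace_inv_conj_le_frobenius_general {d : ℕ} (E T : Matrix (Fin d) (Fin d) ℝ)
    (hT : T.IsHermitian)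
    (hEI : (E - (1 : Matrix (Fin d) (Fin d) ℝ)).PosSemidef) :
    (E⁻¹ * T * E⁻¹ * T).trace ≤ (T * T).trace :=
  trace_mul_mul_mul_le_trace_mul_self hEI.posDef_of_sub_one.inv.posSemidef hEI.one_sub_inv hT

theorem trace_inv_conj_le_frobenius {d : ℕ} (E T : Matrix (Fin d) (Fin d) ℝ)
    (hE : E.IsHermitian) (hT : T.IsHermitian)
    (hEI : (E - (1 : Matrix (Fin d) (Fin d) ℝ)).PosSemidef) :
    (E⁻¹ * T * E⁻¹ * T).trace ≤ (T * T).trace :=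
  trace_inv_conj_le_frobenius_general E T hT hEI
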